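/- Let X be a completely regular topological space and let α be a topology on C(X,$) such that every α-open set is a compact family and, for every x ∈ X, the family 𝒪(x) := {U ∈ C(X,$) : x ∈ U} is α-open. Then the following three cardinals coincide: (i) the α-Lindelöf number αL(X), the least infinite cardinal λ such that every α-cover of X has an α-subcover of cardinality at most λ; (ii) the tightness of the topological space (C(X,$), α) at the point X; (iii) the tightness at the zero function of C(X,ℝ) endowed with the topology α(X,ℝ) generated by the subbase {[𝒜,V] : 𝒜 ∈ α-open, V open in ℝ}, where [𝒜,V] := {f ∈ C(X,ℝ) : f⁻¹(V) ∈ 𝒜}. -/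

import Mathlib

/-!
Every nonempty `α`-open family contains `X`, so an `α`-cover is exactly a family with `X` in its
`α`-closure, and `αL(X)` is the tightness of `(C(X,$), α)` at `X`.

At `0 ∈ C(X,ℝ)` the sets `{f | f⁻¹(-1/(n+1), 1/(n+1)) ∈ 𝒜}`, `𝒜` `α`-open with `X ∈ 𝒜`, form a
neighbourhood base. Hence `S` accumulates at `0` iff for every `n` the family
`{f⁻¹(-1/(n+1), 1/(n+1)) | f ∈ S}` has `X` in its `α`-closure; small subfamilies for each of the
countably many `n` give a small subset of `S`. Conversely, for `X` in the `α`-closure of `𝒫`, the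
functions equal to `1` off some member of `𝒫` accumulate at `0`: complete regularity and
compactness of `α`-open families give, for `U ∈ 𝒜 ∩ 𝒫`, such a function vanishing on a member of
`𝒜`. A small subset accumulating at `0` then selects a small subfamily of `𝒫`, because
`f⁻¹(-1, 1) ⊆ U` when `f = 1` off `U`.
-/

open TopologicalSpace Topology Cardinal

universe u

/-- A family of open sets is *openly isotone* if it is upward closed among open sets. -/
def OpenlyIsotone {X : Type*} [TopologicalSpace X] (A : Set (Opens X)) : Prop :=
  ∀ ⦃U V : Opens X⦄, U ∈ A → U ≤ V → V ∈ A

/-- A family of open sets is a *compact family* if it is openly isotone and whenever the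
union of a collection of open sets belongs to it, the union of some finite subcollection
already belongs to it. -/
def CompactFamily {X : Type*} [TopologicalSpace X] (A : Set (Opens X)) : Prop :=
  OpenlyIsotone A ∧
    ∀ B : Set (Opens X), sSup B ∈ A → ∃ S ⊆ B, S.Finite ∧ sSup S ∈ A

/-- The preimage of an open set under a continuous map, as an open set. -/
def preim {X Z : Type*} [TopologicalSpace X] [TopologicalSpace Z]
    (f : C(X, Z)) (U : Opens Z) : Opens X :=
  ⟨f ⁻¹' U, U.isOpen.preimage f.continuous⟩

/-- `Pfam` is an `α`-cover if it meets every nonempty `α`-open family. -/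
def IsAlphaCover {X : Type*} [TopologicalSpace X] (α : TopologicalSpace (Opens X))
    (Pfam : Set (Opens X)) : Prop :=
  ∀ A : Set (Opens X), IsOpen[α] A → A.Nonempty → (Pfam ∩ A).Nonempty

/-- The `α`-Lindelöf number of `X`: the least infinite cardinal `λ` such that every
`α`-cover of `X` has an `α`-subcover of cardinality at most `λ`. -/
noncomputable def alphaLindelof {X : Type u} [TopologicalSpace X]
    (α : TopologicalSpace (Opens X)) : Cardinal.{u} :=
  sInf {l : Cardinal.{u} | ℵ₀ ≤ l ∧
    ∀ Pfam : Set (Opens X), IsAlphaCover α Pfam →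
      ∃ S ⊆ Pfam, Cardinal.mk S ≤ l ∧ IsAlphaCover α S}

/-- The tightness of a topological space at a point. -/
noncomputable def tightnessAt {Y : Type u} (t : TopologicalSpace Y) (y : Y) :
    Cardinal.{u} :=
  sInf {κ : Cardinal.{u} | ℵ₀ ≤ κ ∧
    ∀ S : Set Y, y ∈ @closure _ t S →
      ∃ T ⊆ S, Cardinal.mk T ≤ κ ∧ y ∈ @closure _ t T}

open Set Filter

theorem Cardinal.mk_iUnion_nat_le {β : Type u} {s : ℕ → Set β} {l : Cardinal.{u}}
    (hl : ℵ₀ ≤ l) (hs : ∀ n, #(s n) ≤ l) : #(⋃ n, s n) ≤ l := by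
  have h := mk_iUnion_le_lift s
  simp only [lift_uzero, mk_nat, lift_aleph0] at h
  calc #(⋃ n, s n) ≤ ℵ₀ * ⨆ n, #(s n) := h
    _ ≤ ℵ₀ * l := mul_le_mul_right (ciSup_le' hs) _
    _ = l := aleph0_mul_eq hl

theorem Set.exists_subset_image_eq_mk_le {β γ : Type u} {f : β → γ} {S : Set β} {Q : Set γ}
    (h : Q ⊆ f '' S) : ∃ T ⊆ S, f '' T = Q ∧ #T ≤ #Q := by
  obtain ⟨R, hRS, rfl⟩ := subset_image_iff.1 h
  obtain ⟨T, hTR, hbij⟩ := exists_subset_bijOn R f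
  refine ⟨T, hTR.trans hRS, hbij.image_eq, ?_⟩
  rw [← hbij.image_eq, mk_image_eq_of_injOn _ _ hbij.injOn]

def TightnessLE {Y : Type u} (t : TopologicalSpace Y) (y : Y) (κ : Cardinal.{u}) : Prop :=
  ∀ S : Set Y, y ∈ closure[t] S → ∃ T ⊆ S, #T ≤ κ ∧ y ∈ closure[t] T

section Covers

variable {X : Type u} [TopologicalSpace X] {α : TopologicalSpace (Opens X)}

theorem OpenlyIsotone.top_mem {A : Set (Opens X)} (hA : OpenlyIsotone A) (hne : A.Nonempty) :
    ⊤ ∈ A :=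
  hA hne.some_mem le_top

theorem isAlphaCover_iff_top_mem_closure (hα : ∀ A, IsOpen[α] A → OpenlyIsotone A)
    (P : Set (Opens X)) : IsAlphaCover α P ↔ ⊤ ∈ closure[α] P := by
  rw [@mem_closure_iff _ α]
  refine ⟨fun h A hA htop => ?_, fun h A hA hne => ?_⟩
  · exact inter_comm P A ▸ h A hA ⟨⊤, htop⟩
  · exact inter_comm A P ▸ h A hA ((hα A hA).top_mem hne)

theorem alphaLindelof_eq_tightnessAt_top (hα : ∀ A, IsOpen[α] A → OpenlyIsotone A) :
    alphaLindelof α = tightnessAt α ⊤ := by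
  simp only [alphaLindelof, tightnessAt, isAlphaCover_iff_top_mem_closure hα]

end Covers

section Separation

variable {X : Type u} [TopologicalSpace X] [CompletelyRegularSpace X]

theorem exists_opens_eqOn_zero_eqOn_one {x : X} {U : Set X} (hU : IsOpen U) (hx : x ∈ U) :
    ∃ W : Opens X, x ∈ W ∧ ∃ f : C(X, ℝ), EqOn f 0 W ∧ EqOn f 1 Uᶜ := by
  obtain ⟨g, hg, hgx, hgU⟩ := CompletelyRegularSpace.completely_regular_isOpen x U hU hx
  have hg' : Continuous fun y => (g y : ℝ) := continuous_subtype_val.comp hg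
  refine ⟨⟨{y | (g y : ℝ) < 1 / 2}, isOpen_lt hg' continuous_const⟩, by simp [hgx],
    ⟨fun y => max 0 (2 * (g y : ℝ) - 1), by fun_prop⟩, fun y hy => ?_, fun y hy => ?_⟩
  · have hy : (g y : ℝ) < 1 / 2 := hy
    simp only [ContinuousMap.coe_mk, Pi.zero_apply, max_eq_left_iff]
    linarith
  · norm_num [hgU hy]

/-- The open sets functionally separated from `Uᶜ` are closed under finite unions and cover `U`;
compactness of `A` then puts one of them in `A`. -/
theorem CompactFamily.exists_mem_eqOn_zero_eqOn_one {A : Set (Opens X)} (hA : CompactFamily A)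
    {U : Opens X} (hU : U ∈ A) :
    ∃ W ∈ A, ∃ f : C(X, ℝ), EqOn f 0 W ∧ EqOn f 1 (U : Set X)ᶜ := by
  let B := {W : Opens X | ∃ f : C(X, ℝ), EqOn f 0 W ∧ EqOn f 1 (U : Set X)ᶜ}
  have hB : SupClosed B := by
    rintro W₁ ⟨f₁, hf₁0, hf₁1⟩ W₂ ⟨f₂, hf₂0, hf₂1⟩
    refine ⟨f₁ * f₂, fun x hx => ?_, fun x hx => by simp [hf₁1 hx, hf₂1 hx]⟩
    rcases Opens.mem_sup.1 hx with hx | hx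
    · simp [hf₁0 hx]
    · simp [hf₂0 hx]
  have hbot : ⊥ ∈ B := ⟨1, by simp, fun _ _ => rfl⟩
  have hUB : U ≤ sSup B := fun x hx =>
    let ⟨W, hxW, hW⟩ := exists_opens_eqOn_zero_eqOn_one U.isOpen hx
    Opens.mem_sSup.2 ⟨W, hW, hxW⟩
  obtain ⟨S, hSB, hSfin, hSA⟩ := hA.2 B (hA.1 hU hUB)
  exact ⟨sSup S, hSA, hB.sSup_mem hSfin hbot hSB⟩

end Separation

section FunctionSpace

variable {X : Type u} [TopologicalSpace X]

/-- The topology `α(X,ℝ)` on `C(X,ℝ)`. -/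
abbrev realTopology (α : TopologicalSpace (Opens X)) : TopologicalSpace C(X, ℝ) :=
  generateFrom {S | ∃ A : Set (Opens X), IsOpen[α] A ∧ ∃ V : Opens ℝ, S = {f | preim f V ∈ A}}

def zeroBall (n : ℕ) : Opens ℝ :=
  ⟨Metric.ball 0 (1 / (n + 1)), Metric.isOpen_ball⟩

theorem zero_mem_zeroBall (n : ℕ) : (0 : ℝ) ∈ zeroBall n :=
  Metric.mem_ball_self Nat.one_div_pos_of_nat

theorem zeroBall_antitone : Antitone zeroBall := fun _ _ h =>
  Metric.ball_subset_ball (Nat.one_div_le_one_div h)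

theorem exists_zeroBall_le {V : Opens ℝ} (h : (0 : ℝ) ∈ V) : ∃ n, zeroBall n ≤ V := by
  obtain ⟨n, -, hn⟩ := Metric.nhds_basis_ball_inv_nat_succ.mem_iff.1 (V.isOpen.mem_nhds h)
  exact ⟨n, hn⟩

theorem preim_mono (f : C(X, ℝ)) {U V : Opens ℝ} (h : U ≤ V) : preim f U ≤ preim f V :=
  fun _ hx => h hx

theorem preim_zero_of_mem {V : Opens ℝ} (h : (0 : ℝ) ∈ V) : preim (0 : C(X, ℝ)) V = ⊤ := by
  ext; simp [preim, h]

theorem preim_zero_of_notMem {V : Opens ℝ} (h : (0 : ℝ) ∉ V) : preim (0 : C(X, ℝ)) V = ⊥ := by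
  ext; simp [preim, h]

variable {α : TopologicalSpace (Opens X)}

theorem realTopology_nhds_zero_hasBasis (hα : ∀ A, IsOpen[α] A → OpenlyIsotone A) :
    (@nhds _ (realTopology α) 0).HasBasis
      (fun p : Set (Opens X) × ℕ => IsOpen[α] p.1 ∧ ⊤ ∈ p.1)
      (fun p => {f | preim f (zeroBall p.2) ∈ p.1}) := by
  have hbasis := hasBasis_biInf_principal'
    (p := fun p : Set (Opens X) × ℕ => IsOpen[α] p.1 ∧ ⊤ ∈ p.1)
    (s := fun p => {f : C(X, ℝ) | preim f (zeroBall p.2) ∈ p.1})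
    (fun p hp q hq => ⟨(p.1 ∩ q.1, max p.2 q.2), ⟨hp.1.inter hq.1, hp.2, hq.2⟩,
      fun f hf => (hα _ hp.1) hf.1 (preim_mono f (zeroBall_antitone (le_max_left _ _))),
      fun f hf => (hα _ hq.1) hf.2 (preim_mono f (zeroBall_antitone (le_max_right _ _)))⟩)
    ⟨(univ, 0), @isOpen_univ _ α, trivial⟩
  convert hbasis using 1
  refine le_antisymm (le_iInf₂ fun p hp => le_principal_iff.2 ?_) ?_
  · refine @IsOpen.mem_nhds _ (realTopology α) _ _ ?_ ?_
    · exact isOpen_generateFrom_of_mem ⟨p.1, hp.1, zeroBall p.2, rfl⟩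
    · simpa [preim_zero_of_mem (zero_mem_zeroBall p.2)] using hp.2
  rw [realTopology, nhds_generateFrom]
  refine le_iInf₂ fun s ⟨h0s, A, hA, V, hsAV⟩ => le_principal_iff.2 (hbasis.mem_iff.2 ?_)
  subst hsAV
  have htop : ⊤ ∈ A := hα A hA h0s le_top
  by_cases h0V : (0 : ℝ) ∈ V
  · obtain ⟨n, hn⟩ := exists_zeroBall_le h0V
    exact ⟨(A, n), ⟨hA, htop⟩, fun f hf => hα A hA hf (preim_mono f hn)⟩
  · have hbot : ⊥ ∈ A := by simpa [preim_zero_of_notMem h0V] using h0s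
    exact ⟨(A, 0), ⟨hA, htop⟩, fun f _ => hα A hA hbot bot_le⟩

theorem zero_mem_closure_realTopology_iff (hα : ∀ A, IsOpen[α] A → OpenlyIsotone A) {S : Set C(X, ℝ)} :
    0 ∈ closure[realTopology α] S ↔
      ∀ A, IsOpen[α] A → ⊤ ∈ A → ∀ n, ∃ f ∈ S, preim f (zeroBall n) ∈ A := by
  let := realTopology α
  rw [mem_closure_iff_nhds_basis (realTopology_nhds_zero_hasBasis hα)]
  exact ⟨fun h A hA htop n => h (A, n) ⟨hA, htop⟩, fun h p hp => h p.1 hp.1 hp.2 p.2⟩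

theorem tightnessLE_zero_of_tightnessLE_top (hα : ∀ A, IsOpen[α] A → OpenlyIsotone A)
    {l : Cardinal.{u}} (hl : ℵ₀ ≤ l) (h : TightnessLE α ⊤ l) :
    TightnessLE (realTopology α) 0 l := by
  intro S hS
  rw [zero_mem_closure_realTopology_iff hα] at hS
  have hcover : ∀ n, ⊤ ∈ closure[α] ((preim · (zeroBall n)) '' S) := fun n =>
    (@mem_closure_iff _ α _ _).2 fun A hA htop =>
      let ⟨f, hfS, hfA⟩ := hS A hA htop n
      ⟨_, hfA, mem_image_of_mem _ hfS⟩
  choose Q hQS hQl hQ using fun n => h _ (hcover n)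
  choose T hTS hTQ hTQl using fun n => exists_subset_image_eq_mk_le (hQS n)
  refine ⟨⋃ n, T n, iUnion_subset hTS,
    mk_iUnion_nat_le hl fun n => (hTQl n).trans (hQl n), (zero_mem_closure_realTopology_iff hα).2 ?_⟩
  intro A hA htop n
  obtain ⟨U, hUA, hUQ⟩ := (@mem_closure_iff _ α _ _).1 (hQ n) A hA htop
  rw [← hTQ n] at hUQ
  obtain ⟨f, hfT, rfl⟩ := hUQ
  exact ⟨f, mem_iUnion_of_mem n hfT, hUA⟩

theorem preim_zeroBall_zero_le {f : C(X, ℝ)} {U : Opens X} (hf : EqOn f 1 (U : Set X)ᶜ) :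
    preim f (zeroBall 0) ≤ U := fun x hx => by
  by_contra hxU
  simp [preim, zeroBall, hf hxU] at hx

theorem tightnessLE_top_of_tightnessLE_zero [CompletelyRegularSpace X]
    (hα : ∀ A, IsOpen[α] A → CompactFamily A) {κ : Cardinal.{u}}
    (h : TightnessLE (realTopology α) 0 κ) : TightnessLE α ⊤ κ := by
  have hαiso : ∀ A, IsOpen[α] A → OpenlyIsotone A := fun A hA => (hα A hA).1
  intro P hP
  let M := {f : C(X, ℝ) | ∃ U ∈ P, EqOn f 1 (U : Set X)ᶜ}
  have hM : 0 ∈ closure[realTopology α] M := by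
    refine (zero_mem_closure_realTopology_iff hαiso).2 fun A hA htop n => ?_
    obtain ⟨U, hUA, hUP⟩ := (@mem_closure_iff _ α _ _).1 hP A hA htop
    obtain ⟨W, hWA, f, hf0, hf1⟩ := (hα A hA).exists_mem_eqOn_zero_eqOn_one hUA
    refine ⟨f, ⟨U, hUP, hf1⟩, hαiso A hA hWA fun x hx => ?_⟩
    simpa [preim, hf0 hx] using zero_mem_zeroBall n
  obtain ⟨T, hTM, hTκ, hT⟩ := h M hM
  choose u huP hu using hTM
  refine ⟨range fun f : T => u f.2, range_subset_iff.2 fun f => huP f.2,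
    mk_range_le.trans hTκ, (@mem_closure_iff _ α _ _).2 fun A hA htop => ?_⟩
  obtain ⟨f, hfT, hfA⟩ := (zero_mem_closure_realTopology_iff hαiso).1 hT A hA htop 0
  exact ⟨u hfT, hαiso A hA hfA (preim_zeroBall_zero_le (hu hfT)), ⟨f, hfT⟩, rfl⟩

end FunctionSpace

theorem alphaLindelof_eq_tightness_general {X : Type u} [TopologicalSpace X]
    [CompletelyRegularSpace X]
    (α : TopologicalSpace (Opens X))
    (hcpt : ∀ S : Set (Opens X), IsOpen[α] S → CompactFamily S) :
    alphaLindelof α = tightnessAt α (⊤ : Opens X) ∧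
      tightnessAt α (⊤ : Opens X) =
        tightnessAt
          (TopologicalSpace.generateFrom
            {S : Set C(X, ℝ) |
              ∃ A : Set (Opens X), IsOpen[α] A ∧
                ∃ V : Opens ℝ, S = {f : C(X, ℝ) | preim f V ∈ A}})
          (0 : C(X, ℝ)) := by
  have hiso : ∀ A, IsOpen[α] A → OpenlyIsotone A := fun A hA => (hcpt A hA).1
  refine ⟨alphaLindelof_eq_tightnessAt_top hiso, congrArg sInf (ext fun κ => and_congr_right
    fun hκ => ⟨tightnessLE_zero_of_tightnessLE_top hiso hκ,
      tightnessLE_top_of_tightnessLE_zero hcpt⟩)⟩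

/-- For a completely regular `X` and a topology `α` on `C(X,$)` with `p(X) ⊆ α ⊆ κ(X)`
(all `α`-open sets are compact families and every `𝒪(x)` is `α`-open), the `α`-Lindelöf
number of `X`, the tightness of `(C(X,$),α)` at `X`, and the tightness of `C_α(X,ℝ)` at
the zero function coincide. -/
theorem alphaLindelof_eq_tightness {X : Type u} [TopologicalSpace X]
    [CompletelyRegularSpace X]
    (α : TopologicalSpace (Opens X))
    (hcpt : ∀ S : Set (Opens X), IsOpen[α] S → CompactFamily S)
    (hp : ∀ x : X, IsOpen[α] {U : Opens X | x ∈ U}) :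
    alphaLindelof α = tightnessAt α (⊤ : Opens X) ∧
      tightnessAt α (⊤ : Opens X) =
        tightnessAt
          (TopologicalSpace.generateFrom
            {S : Set C(X, ℝ) |
              ∃ A : Set (Opens X), IsOpen[α] A ∧
                ∃ V : Opens ℝ, S = {f : C(X, ℝ) | preim f V ∈ A}})
          (0 : C(X, ℝ)) :=
  alphaLindelof_eq_tightness_general α hcpt
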